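/- Operational formula for the Rényi probability: for any strictly positive PMF p_X, order q ∈ (0,1) ∪ (1,∞), and constant C > 0, the maximum over betting PMFs b_X of the isoelastic certainty equivalent with risk aversion 1/q and constant odds C, namely max_{b_X} (Σ_x (b(x)·C)^{1−1/q} p(x))^{1/(1−1/q)}, equals C · p_q(X), where p_q(X) = (Σ_x p(x)^q)^{1/(q−1)}. -/

import Mathlib

open Finset Real

/-! At constant odds `C` the certainty equivalent of a bet `b` factors as
`C * (∑ b ^ α * p) ^ (1 / α)` with `α = 1 - 1 / q`. Hölder's inequality with weights `b`
(exponent `q` when `q > 1`, exponent `1 / q` when `q < 1`) compares `∑ b ^ α * p` with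
`(∑ p ^ q) ^ (1 / q)` in exactly the direction that survives raising to the power `1 / α`, which
is positive in the first case and negative in the second; since `q * α = q - 1`, the bound is
`C * (∑ p ^ q) ^ (1 / (q - 1))`. The escort bet `p ^ q / ∑ p ^ q` makes Hölder an equality. -/

section Holder

variable {ι : Type*} (s : Finset ι) {b p : ι → ℝ}

theorem sum_rpow_one_sub_one_div_mul_le {q : ℝ} (hq : 1 ≤ q) (hb : ∀ i, 0 < b i)
    (hp : ∀ i, 0 ≤ p i) :
    ∑ i ∈ s, b i ^ (1 - 1 / q) * p i
      ≤ (∑ i ∈ s, b i) ^ (1 - 1 / q) * (∑ i ∈ s, p i ^ q) ^ (1 / q) := by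
  have hq0 : q ≠ 0 := by positivity
  have hinner (i : ι) : b i * (p i / b i ^ q⁻¹) = b i ^ (1 - q⁻¹) * p i := by
    rw [rpow_sub (hb i), rpow_one]
    ring
  have hpow (i : ι) : b i * (p i / b i ^ q⁻¹) ^ q = p i ^ q := by
    rw [div_rpow (hp i) (rpow_nonneg (hb i).le _), ← rpow_mul (hb i).le, inv_mul_cancel₀ hq0,
      rpow_one, mul_div_cancel₀ _ (hb i).ne']
  simp only [one_div]
  simpa only [hinner, hpow] using inner_le_weight_mul_Lp_of_nonneg s hq b
    (fun i ↦ p i / b i ^ q⁻¹) (fun i ↦ (hb i).le)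
    (fun i ↦ div_nonneg (hp i) (rpow_nonneg (hb i).le _))

theorem sum_rpow_le_sum_rpow_one_sub_one_div_mul {q : ℝ} (hq0 : 0 < q) (hq1 : q ≤ 1)
    (hb : ∀ i, 0 < b i) (hp : ∀ i, 0 ≤ p i) :
    ∑ i ∈ s, p i ^ q
      ≤ (∑ i ∈ s, b i) ^ (1 - q) * (∑ i ∈ s, b i ^ (1 - 1 / q) * p i) ^ q := by
  have hinner (i : ι) : b i * (p i ^ q / b i) = p i ^ q := mul_div_cancel₀ _ (hb i).ne'
  have hpow (i : ι) : b i * (p i ^ q / b i) ^ q⁻¹ = b i ^ (1 - q⁻¹) * p i := by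
    rw [div_rpow (rpow_nonneg (hp i) _) (hb i).le, ← rpow_mul (hp i), mul_inv_cancel₀ hq0.ne',
      rpow_one, rpow_sub (hb i), rpow_one]
    field_simp
  simp only [one_div]
  simpa only [hinner, hpow, inv_inv] using inner_le_weight_mul_Lp_of_nonneg s
    (one_le_inv₀ hq0 |>.mpr hq1) b (fun i ↦ p i ^ q / b i) (fun i ↦ (hb i).le)
    (fun i ↦ div_nonneg (rpow_nonneg (hp i) _) (hb i).le)

end Holder

section Betting

variable {X : Type*} [Fintype X]

noncomputable def isoelasticCertaintyEquivalent (R C : ℝ) (p b : X → ℝ) : ℝ :=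
  (∑ x, (b x * C) ^ (1 - R) * p x) ^ (1 / (1 - R))

noncomputable def escortBet (q : ℝ) (p : X → ℝ) (x : X) : ℝ :=
  p x ^ q / ∑ y, p y ^ q

noncomputable def renyiProbability (q : ℝ) (p : X → ℝ) : ℝ :=
  (∑ x, p x ^ q) ^ (1 / (q - 1))

variable {q C : ℝ} {p b : X → ℝ}

theorem isoelasticCertaintyEquivalent_eq_mul {R : ℝ} (hR : R ≠ 1) (hC : 0 < C)
    (hp : ∀ x, 0 ≤ p x) (hb : ∀ x, 0 ≤ b x) :
    isoelasticCertaintyEquivalent R C p b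
      = C * (∑ x, b x ^ (1 - R) * p x) ^ (1 / (1 - R)) := by
  have hsum : ∑ x, (b x * C) ^ (1 - R) * p x = C ^ (1 - R) * ∑ x, b x ^ (1 - R) * p x := by
    rw [mul_sum]
    refine sum_congr rfl fun x _ ↦ ?_
    rw [mul_rpow (hb x) hC.le]
    ring
  rw [isoelasticCertaintyEquivalent, hsum,
    mul_rpow (by positivity) (sum_nonneg fun x _ ↦ mul_nonneg (rpow_nonneg (hb x) _) (hp x)),
    ← rpow_mul hC.le, mul_one_div_cancel (sub_ne_zero.mpr hR.symm), rpow_one]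

theorem renyiProbability_eq_rpow_rpow (hq0 : q ≠ 0) (hq1 : q ≠ 1) (hp : ∀ x, 0 ≤ p x) :
    renyiProbability q p = ((∑ x, p x ^ q) ^ (1 / q)) ^ (1 / (1 - 1 / q)) := by
  rw [renyiProbability, ← rpow_mul (sum_nonneg fun x _ ↦ rpow_nonneg (hp x) q)]
  congr 1
  field_simp [sub_ne_zero.mpr hq1]

variable [Nonempty X]

theorem sum_rpow_pos (hp : ∀ x, 0 < p x) (q : ℝ) : 0 < ∑ x, p x ^ q :=
  sum_pos (fun x _ ↦ rpow_pos_of_pos (hp x) q) univ_nonempty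

theorem escortBet_pos (hp : ∀ x, 0 < p x) (q : ℝ) (x : X) : 0 < escortBet q p x :=
  div_pos (rpow_pos_of_pos (hp x) q) (sum_rpow_pos hp q)

theorem sum_escortBet (hp : ∀ x, 0 < p x) (q : ℝ) : ∑ x, escortBet q p x = 1 := by
  unfold escortBet
  rw [← sum_div, div_self (sum_rpow_pos hp q).ne']

theorem sum_escortBet_rpow_one_sub_one_div_mul (hp : ∀ x, 0 < p x) (hq : q ≠ 0) :
    ∑ x, escortBet q p x ^ (1 - 1 / q) * p x = (∑ x, p x ^ q) ^ (1 / q) := by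
  have hS := sum_rpow_pos hp q
  have hterm (x : X) :
      escortBet q p x ^ (1 - 1 / q) * p x = p x ^ q / (∑ y, p y ^ q) ^ (1 - 1 / q) := by
    rw [escortBet, div_rpow (rpow_nonneg (hp x).le q) hS.le, ← rpow_mul (hp x).le, mul_sub,
      mul_one, mul_one_div_cancel hq, rpow_sub (hp x), rpow_one, div_right_comm,
      div_mul_cancel₀ _ (hp x).ne']
  rw [sum_congr rfl fun x _ ↦ hterm x, ← sum_div]
  conv_rhs => rw [show 1 / q = 1 - (1 - 1 / q) by ring, rpow_sub hS, rpow_one]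

theorem isoelasticCertaintyEquivalent_escortBet (hp : ∀ x, 0 < p x) (hq0 : q ≠ 0) (hq1 : q ≠ 1)
    (hC : 0 < C) :
    isoelasticCertaintyEquivalent (1 / q) C p (escortBet q p) = C * renyiProbability q p := by
  rw [isoelasticCertaintyEquivalent_eq_mul (by simpa [eq_comm] using hq1) hC (hp · |>.le)
    (escortBet_pos hp q · |>.le), sum_escortBet_rpow_one_sub_one_div_mul hp hq0,
    renyiProbability_eq_rpow_rpow hq0 hq1 (hp · |>.le)]

theorem isoelasticCertaintyEquivalent_le (hp : ∀ x, 0 < p x) (hb : ∀ x, 0 < b x)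
    (hb_sum : ∑ x, b x = 1) (hq0 : 0 < q) (hq1 : q ≠ 1) (hC : 0 < C) :
    isoelasticCertaintyEquivalent (1 / q) C p b ≤ C * renyiProbability q p := by
  rw [isoelasticCertaintyEquivalent_eq_mul (by simpa [eq_comm] using hq1) hC (hp · |>.le)
    (hb · |>.le), renyiProbability_eq_rpow_rpow hq0.ne' hq1 (hp · |>.le)]
  refine mul_le_mul_of_nonneg_left ?_ hC.le
  have hS := sum_rpow_pos hp q
  have hT : 0 ≤ ∑ x, b x ^ (1 - 1 / q) * p x :=
    sum_nonneg fun x _ ↦ mul_nonneg (rpow_nonneg (hb x).le _) (hp x).le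
  rcases hq1.lt_or_gt with hlt | hgt
  · have hle : ∑ x, p x ^ q ≤ (∑ x, b x ^ (1 - 1 / q) * p x) ^ q := by
      simpa [hb_sum] using
        sum_rpow_le_sum_rpow_one_sub_one_div_mul univ hq0 hlt.le hb (hp · |>.le)
    refine rpow_le_rpow_of_nonpos (rpow_pos_of_pos hS _) ?_
      (one_div_nonpos.mpr (sub_nonpos.mpr (one_le_one_div hq0 hlt.le)))
    simpa only [one_div] using (rpow_inv_le_iff_of_pos hS.le hT hq0).mpr hle
  · have hle : ∑ x, b x ^ (1 - 1 / q) * p x ≤ (∑ x, p x ^ q) ^ (1 / q) := by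
      simpa [hb_sum] using sum_rpow_one_sub_one_div_mul_le univ hgt.le hb (hp · |>.le)
    exact rpow_le_rpow hT hle
      (one_div_nonneg.mpr (sub_nonneg.mpr ((div_le_one hq0).mpr hgt.le)))

end Betting

theorem renyi_probability_operational_general
    {X : Type} [Fintype X] [Nonempty X]
    (q : ℝ) (hq0 : 0 < q) (hq1 : q ≠ 1) (C : ℝ) (hC : 0 < C)
    (p : X → ℝ) (hp_pos : ∀ x, 0 < p x) :
    IsGreatest
      {w : ℝ | ∃ b : X → ℝ, (∀ x, 0 < b x) ∧ (∑ x, b x = 1) ∧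
        w = (∑ x, (b x * C) ^ (1 - 1 / q) * p x) ^ (1 / (1 - 1 / q))}
      (C * (∑ x, (p x) ^ q) ^ (1 / (q - 1))) := by
  refine ⟨⟨escortBet q p, escortBet_pos hp_pos q, sum_escortBet hp_pos q, ?_⟩, ?_⟩
  · exact (isoelasticCertaintyEquivalent_escortBet hp_pos hq0.ne' hq1 hC).symm
  · rintro w ⟨b, hb_pos, hb_sum, rfl⟩
    exact isoelasticCertaintyEquivalent_le hp_pos hb_pos hb_sum hq0 hq1 hC

/-- Operational formula for the Rényi probability: for any strictly
positive PMF `p_X`, order `q ∈ (0,1) ∪ (1,∞)`, and constant `C > 0`, the maximum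
over betting PMFs `b_X` of the isoelastic certainty equivalent with risk aversion
`1/q` and constant odds `C`, namely
`max_{b_X} (Σ_x (b(x)·C)^{1−1/q} p(x))^{1/(1−1/q)}`, equals `C · p_q(X)`, where
`p_q(X) = (Σ_x p(x)^q)^{1/(q−1)}`. -/
theorem renyi_probability_operational
    {X : Type} [Fintype X] [Nonempty X]
    (q : ℝ) (hq0 : 0 < q) (hq1 : q ≠ 1) (C : ℝ) (hC : 0 < C)
    (p : X → ℝ) (hp_pos : ∀ x, 0 < p x) (hp_sum : ∑ x, p x = 1) :
    IsGreatest
      {w : ℝ | ∃ b : X → ℝ, (∀ x, 0 < b x) ∧ (∑ x, b x = 1) ∧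
        w = (∑ x, (b x * C) ^ (1 - 1 / q) * p x) ^ (1 / (1 - 1 / q))}
      (C * (∑ x, (p x) ^ q) ^ (1 / (q - 1))) :=
  renyi_probability_operational_general q hq0 hq1 C hC p hp_pos
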